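/- The function h ↦ N(h) defined implicitly by ∑_{n,m≥1} K(n+m) exp(−n·N(h)) = exp(−h) for h > 0 is strictly increasing and convex on (0,∞). -/
import Mathlib


open Filter Real

def SlowlyVarying (L : ℕ → ℝ) : Prop :=
  ∀ c : ℕ, 0 < c → Tendsto (fun n => L (c * n) / L n) atTop (nhds 1)

/-- the function `h ↦ N(h)` defined implicitly by
`∑_{n,m≥1} K(n+m) exp(-n N(h)) = exp(-h)` for `h > 0` is strictly increasing and
convex on `(0,∞)`. -/
theorem tilt_strictMono_convex (α : ℝ) (hα : 0 < α) (L K : ℕ → ℝ)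
    (hL : SlowlyVarying L) (hLpos : ∀ n, 0 < L n)
    (hK : ∀ n : ℕ, 1 ≤ n → K n = L n / (n : ℝ) ^ (2 + α))
    (hnorm : ∑' n : ℕ, ∑' m : ℕ, K ((n + 1) + (m + 1)) = 1)
    (Nh : ℝ → ℝ)
    (hNh : ∀ h : ℝ, 0 < h → 0 < Nh h ∧
      ∑' n : ℕ, ∑' m : ℕ, K ((n + 1) + (m + 1)) * Real.exp (-(((n : ℝ) + 1) * Nh h))
        = Real.exp (-h)) :
    StrictMonoOn Nh (Set.Ioi 0) ∧ ConvexOn ℝ (Set.Ioi 0) Nh := by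
  -- positivity of K
  have Kpos : ∀ k : ℕ, 1 ≤ k → 0 < K k := by
    intro k hk
    have hk0 : (0 : ℝ) < (k : ℝ) := by exact_mod_cast hk
    rw [hK k hk]
    have := hLpos k
    positivity
  -- summability of K
  have hshift : ∀ n : ℕ, (fun m : ℕ => K ((n + 1) + (m + 1))) = fun m : ℕ => K (m + (n + 2)) := by
    intro n; funext m; congr 1; omega
  have hSK : Summable K := by
    by_contra hns
    have h0 : ∀ n : ℕ, ∑' m : ℕ, K ((n + 1) + (m + 1)) = 0 := by
      intro n
      apply tsum_eq_zero_of_not_summable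
      rw [hshift n, summable_nat_add_iff]
      exact hns
    simp only [h0, tsum_zero] at hnorm
    exact one_ne_zero hnorm.symm
  have hInner : ∀ n : ℕ, Summable fun m : ℕ => K ((n + 1) + (m + 1)) := by
    intro n; rw [hshift n]; exact (summable_nat_add_iff _).2 hSK
  have hOuter : Summable fun n : ℕ => ∑' m : ℕ, K ((n + 1) + (m + 1)) := by
    by_contra hns
    rw [tsum_eq_zero_of_not_summable hns] at hnorm
    exact one_ne_zero hnorm.symm
  have SF : Summable fun p : ℕ × ℕ => K ((p.1 + 1) + (p.2 + 1)) :=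
    (summable_prod_of_nonneg fun p => (Kpos _ (by omega)).le).2 ⟨hInner, hOuter⟩
  -- the basic family of terms
  set f : ℝ → ℕ × ℕ → ℝ :=
    fun lam p => K ((p.1 + 1) + (p.2 + 1)) * Real.exp (-(((p.1 : ℝ) + 1) * lam)) with hf
  have fpos : ∀ (lam : ℝ) (p : ℕ × ℕ), 0 < f lam p := fun lam p =>
    mul_pos (Kpos _ (by omega)) (Real.exp_pos _)
  have fle : ∀ lam : ℝ, 0 ≤ lam → ∀ p : ℕ × ℕ, f lam p ≤ K ((p.1 + 1) + (p.2 + 1)) := by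
    intro lam hlam p
    have h1 : 0 ≤ ((p.1 : ℝ) + 1) * lam := by positivity
    have h2 : Real.exp (-(((p.1 : ℝ) + 1) * lam)) ≤ 1 := by
      have h2' : Real.exp (-(((p.1 : ℝ) + 1) * lam)) ≤ Real.exp 0 :=
        Real.exp_le_exp.2 (by linarith)
      rwa [Real.exp_zero] at h2'
    calc f lam p ≤ K ((p.1 + 1) + (p.2 + 1)) * 1 :=
          mul_le_mul_of_nonneg_left h2 (Kpos _ (by omega)).le
      _ = K ((p.1 + 1) + (p.2 + 1)) := mul_one _
  have fsum : ∀ lam : ℝ, 0 ≤ lam → Summable (f lam) := fun lam hlam =>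
    Summable.of_nonneg_of_le (fun p => (fpos lam p).le) (fle lam hlam) SF
  -- value of the full sum
  have hSval : ∀ h : ℝ, 0 < h → ∑' p : ℕ × ℕ, f (Nh h) p = Real.exp (-h) := by
    intro h hh
    rw [Summable.tsum_prod' (fsum _ (hNh h hh).1.le) (fun n => ?_)]
    · exact (hNh h hh).2
    · exact Summable.of_nonneg_of_le (fun m => (fpos _ (n, m)).le)
        (fun m => fle _ (hNh h hh).1.le (n, m)) (hInner n)
  -- strict antitonicity of the full sum
  have hanti : ∀ u v : ℝ, 0 ≤ u → u < v → ∑' p : ℕ × ℕ, f v p < ∑' p : ℕ × ℕ, f u p := by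
    intro u v hu huv
    refine Summable.tsum_lt_tsum (i := ((0 : ℕ), (0 : ℕ))) (fun p => ?_) ?_
      (fsum v (hu.trans huv.le)) (fsum u hu)
    · refine mul_le_mul_of_nonneg_left (Real.exp_le_exp.2 ?_) (Kpos _ (by omega)).le
      have h1 : (0 : ℝ) ≤ (p.1 : ℝ) + 1 := by positivity
      nlinarith
    · refine mul_lt_mul_of_pos_left (Real.exp_lt_exp.2 ?_) (Kpos _ (by omega))
      simp only [Nat.cast_zero]
      nlinarith
  -- strict monotonicity
  have smono : StrictMonoOn Nh (Set.Ioi 0) := by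
    intro a ha b hb hab
    have ha' : (0 : ℝ) < a := ha
    have hb' : (0 : ℝ) < b := hb
    by_contra hle
    push_neg at hle
    rcases eq_or_lt_of_le hle with heq | hlt
    · have h1 := hSval a ha'
      have h2 := hSval b hb'
      rw [← heq] at h1
      rw [h2] at h1
      have := Real.exp_injective h1
      have : a = b := by linarith [neg_injective this]
      exact absurd this hab.ne
    · have h3 := hanti (Nh b) (Nh a) (hNh b hb').1.le hlt
      rw [hSval a ha', hSval b hb'] at h3
      have := Real.exp_lt_exp.1 h3
      linarith
  refine ⟨smono, convex_Ioi 0, ?_⟩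
  intro a ha b hb t s ht hs hts
  simp only [smul_eq_mul]
  have ha' : (0 : ℝ) < a := ha
  have hb' : (0 : ℝ) < b := hb
  rcases eq_or_lt_of_le ht with ht0 | htpos
  · have hs1 : s = 1 := by linarith
    simp [← ht0, hs1]
  rcases eq_or_lt_of_le hs with hs0 | hspos
  · have ht1 : t = 1 := by linarith
    simp [← hs0, ht1]
  -- main case: 0 < t, 0 < s
  have hxa := (hNh a ha').1
  have hxb := (hNh b hb').1
  have hc : (0 : ℝ) < t * a + s * b := by positivity
  have hz : (0 : ℝ) < t * Nh a + s * Nh b := by positivity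
  by_contra hgt
  push_neg at hgt
  have hlt := hanti (t * Nh a + s * Nh b) (Nh (t * a + s * b)) hz.le hgt
  rw [hSval _ hc] at hlt
  -- Hölder / Young bound: S(t x + s y) ≤ exp(-(t a + s b))
  set A := Real.exp (-a) with hA
  set B := Real.exp (-b) with hB
  have hA0 : (0 : ℝ) < A := Real.exp_pos _
  have hB0 : (0 : ℝ) < B := Real.exp_pos _
  have hSx : ∑' p : ℕ × ℕ, f (Nh a) p = A := hSval a ha'
  have hSy : ∑' p : ℕ × ℕ, f (Nh b) p = B := hSval b hb'
  -- pointwise bound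
  have hptw : ∀ p : ℕ × ℕ, f (t * Nh a + s * Nh b) p ≤
      A ^ t * B ^ s * (t / A) * f (Nh a) p + A ^ t * B ^ s * (s / B) * f (Nh b) p := by
    intro p
    have hKp : (0 : ℝ) < K ((p.1 + 1) + (p.2 + 1)) := Kpos _ (by omega)
    have h1 : f (t * Nh a + s * Nh b) p = (f (Nh a) p) ^ t * (f (Nh b) p) ^ s := by
      simp only [hf]
      rw [Real.mul_rpow hKp.le (Real.exp_pos _).le,
        Real.mul_rpow hKp.le (Real.exp_pos _).le, mul_mul_mul_comm,
        ← Real.rpow_add hKp, hts, Real.rpow_one, ← Real.exp_mul, ← Real.exp_mul,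
        ← Real.exp_add]
      congr 1
      ring
    have h2 : (f (Nh a) p / A) ^ t * (f (Nh b) p / B) ^ s ≤
        t * (f (Nh a) p / A) + s * (f (Nh b) p / B) :=
      Real.geom_mean_le_arith_mean2_weighted ht hs (by positivity) (by positivity) hts
    have h3 : (f (Nh a) p) ^ t * (f (Nh b) p) ^ s =
        A ^ t * B ^ s * ((f (Nh a) p / A) ^ t * (f (Nh b) p / B) ^ s) := by
      rw [Real.div_rpow (fpos _ _).le hA0.le, Real.div_rpow (fpos _ _).le hB0.le]
      have hAt : (0 : ℝ) < A ^ t := Real.rpow_pos_of_pos hA0 t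
      have hBs : (0 : ℝ) < B ^ s := Real.rpow_pos_of_pos hB0 s
      field_simp
    have h4 : A ^ t * B ^ s * ((f (Nh a) p / A) ^ t * (f (Nh b) p / B) ^ s) ≤
        A ^ t * B ^ s * (t * (f (Nh a) p / A) + s * (f (Nh b) p / B)) := by
      refine mul_le_mul_of_nonneg_left h2 ?_
      positivity
    rw [h1, h3]
    refine h4.trans (le_of_eq ?_)
    field_simp
  have hsum1 : Summable fun p : ℕ × ℕ => A ^ t * B ^ s * (t / A) * f (Nh a) p :=
    (fsum _ hxa.le).mul_left _
  have hsum2 : Summable fun p : ℕ × ℕ => A ^ t * B ^ s * (s / B) * f (Nh b) p :=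
    (fsum _ hxb.le).mul_left _
  have key : ∑' p : ℕ × ℕ, f (t * Nh a + s * Nh b) p ≤ Real.exp (-(t * a + s * b)) := by
    have step1 : ∑' p : ℕ × ℕ, f (t * Nh a + s * Nh b) p ≤
        ∑' p : ℕ × ℕ, (A ^ t * B ^ s * (t / A) * f (Nh a) p +
          A ^ t * B ^ s * (s / B) * f (Nh b) p) :=
      Summable.tsum_le_tsum hptw (fsum _ hz.le) (hsum1.add hsum2)
    have step2 : ∑' p : ℕ × ℕ, (A ^ t * B ^ s * (t / A) * f (Nh a) p +
        A ^ t * B ^ s * (s / B) * f (Nh b) p) =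
        A ^ t * B ^ s * (t / A) * A + A ^ t * B ^ s * (s / B) * B := by
      rw [Summable.tsum_add hsum1 hsum2, tsum_mul_left, tsum_mul_left, hSx, hSy]
    have step3 : A ^ t * B ^ s * (t / A) * A + A ^ t * B ^ s * (s / B) * B =
        A ^ t * B ^ s := by
      rw [mul_assoc (A ^ t * B ^ s), div_mul_cancel₀ t hA0.ne',
        mul_assoc (A ^ t * B ^ s), div_mul_cancel₀ s hB0.ne', ← mul_add, hts, mul_one]
    have step4 : A ^ t * B ^ s = Real.exp (-(t * a + s * b)) := by
      rw [hA, hB, ← Real.exp_mul, ← Real.exp_mul, ← Real.exp_add]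
      congr 1
      ring
    rw [step2, step3, step4] at step1
    exact step1
  linarith
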